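/- For every connected graph G that admits a cover by isometric cycles, gp(G) ≤ 3·ic(G), where ic(G) is the isometric-cycle number of G. -/

import Mathlib

open SimpleGraph

/-- `S` is a general position set of `G`: no three distinct vertices of `S`
lie on a common geodesic. -/
def IsGPSet {V : Type*} (G : SimpleGraph V) (S : Set V) : Prop :=
  ∀ x ∈ S, ∀ y ∈ S, ∀ z ∈ S, x ≠ y → y ≠ z → x ≠ z →
    G.dist x z ≠ G.dist x y + G.dist y z

/-- The general position number of `G`. -/
noncomputable def gpNumber {V : Type*} (G : SimpleGraph V) : ℕ :=
  sSup {n | ∃ S : Set V, IsGPSet G S ∧ S.Finite ∧ S.ncard = n}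

/-- A subgraph `H` of `G` is isometric if distances in `H` agree with
distances in `G`. -/
def IsIsometricSubgraph {V : Type*} {G : SimpleGraph V} (H : G.Subgraph) : Prop :=
  ∀ x y : H.verts, H.coe.dist x y = G.dist (x : V) (y : V)

/-- A subgraph of `G` which is an isometric cycle: it is isomorphic to a cycle
graph (on at least 3 vertices) and isometric in `G`. -/
def IsIsometricCycle {V : Type*} {G : SimpleGraph V} (H : G.Subgraph) : Prop :=
  (∃ n : ℕ, 3 ≤ n ∧ Nonempty (H.coe ≃g cycleGraph n)) ∧ IsIsometricSubgraph H

/-- `n` isometric cycles suffice to cover the vertices of `G`. -/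
def HasIsometricCycleCover {V : Type*} (G : SimpleGraph V) (n : ℕ) : Prop :=
  ∃ H : Fin n → G.Subgraph, (∀ i, IsIsometricCycle (H i)) ∧
    (⋃ i, (H i).verts) = Set.univ

/-- The isometric-cycle number of `G`. -/
noncomputable def icNumber {V : Type*} (G : SimpleGraph V) : ℕ :=
  sInf {n | HasIsometricCycleCover G n}

/-!
Among four vertices of a cycle taken in cyclic order, the arcs `a → b → c` and `c → d → a`
cover the cycle, so one of them has length at most half of it and is then a geodesic through
three of the four vertices. An isometric cycle carries the distances of `G`, so a general position
set of `G` meets it in at most three vertices, and a cover by `ic(G)` isometric cycles gives the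
bound.
-/

open scoped Fin.NatCast Fin.IntCast Fin.CommRing

lemma Fin.min_val_sub_le_natAbs {n : ℕ} [NeZero n] {u v : Fin n} {s : ℤ}
    (h : (s : Fin n) = v - u) :
    min (v - u).val (u - v).val ≤ s.natAbs := by
  obtain ⟨m, rfl | rfl⟩ := Int.eq_nat_or_neg s
  · refine min_le_of_left_le ?_
    rw [← h, Int.cast_natCast, Fin.val_natCast]
    exact Nat.mod_le _ _
  · have h' : (m : Fin n) = u - v := by
      rw [← neg_sub, ← h, Int.cast_neg, Int.cast_natCast, neg_neg]
    refine min_le_of_right_le ?_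
    rw [← h', Fin.val_natCast, Int.natAbs_neg, Int.natAbs_natCast]
    exact Nat.mod_le _ _

namespace SimpleGraph

variable {V W : Type*} {G : SimpleGraph V} {G' : SimpleGraph W}

lemma Hom.edist_le (f : G →g G') (u v : V) : G'.edist (f u) (f v) ≤ G.edist u v :=
  le_iInf fun w => by simpa using (w.map f).edist_le

lemma Iso.dist_eq (f : G ≃g G') (u v : V) : G'.dist (f u) (f v) = G.dist u v := by
  have h : G'.edist (f u) (f v) = G.edist u v :=
    le_antisymm (f.toHom.edist_le u v) (by simpa using f.symm.toHom.edist_le (f u) (f v))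
  simp only [dist, h]

section cycleGraph

variable {n : ℕ}

lemma cycleGraph_dist_le_val_sub (hn : 2 ≤ n) [NeZero n] (u v : Fin n) :
    (cycleGraph n).dist u v ≤ (v - u).val := by
  obtain ⟨m, rfl⟩ : ∃ m, n = m + 2 := ⟨n - 2, by omega⟩
  suffices h : ∀ k : ℕ, (cycleGraph (m + 2)).dist u (u + k) ≤ k by
    simpa using h (v - u).val
  intro k
  induction k with
  | zero => simp
  | succ k ih =>
    have hadj : (cycleGraph (m + 2)).Adj (u + k) (u + (k + 1 : ℕ)) := by
      rw [cycleGraph_adj]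
      right
      push_cast
      ring
    calc (cycleGraph (m + 2)).dist u (u + (k + 1 : ℕ))
        ≤ (cycleGraph (m + 2)).dist u (u + k)
          + (cycleGraph (m + 2)).dist (u + k) (u + (k + 1 : ℕ)) :=
          cycleGraph_connected.dist_triangle
      _ ≤ k + 1 := by rw [dist_eq_one_iff_adj.mpr hadj]; omega

lemma Walk.exists_intCast_eq_sub [NeZero n] {u v : Fin n} (w : (cycleGraph n).Walk u v) :
    ∃ s : ℤ, s.natAbs ≤ w.length ∧ (s : Fin n) = v - u := by
  induction w with
  | nil => exact ⟨0, by simp⟩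
  | @cons u u' v hadj w ih =>
    obtain ⟨s, hs, hsv⟩ := ih
    have val_eq_one {x : Fin n} (hx : x.val = 1) : x = 1 := by
      rw [← Fin.cast_val_eq_self x, hx, Nat.cast_one]
    rcases cycleGraph_adj'.mp hadj with h | h
    · refine ⟨s - 1, by simp only [Walk.length_cons]; omega, ?_⟩
      rw [Int.cast_sub, hsv, Int.cast_one, ← val_eq_one h]
      ring
    · refine ⟨s + 1, by simp only [Walk.length_cons]; omega, ?_⟩
      rw [Int.cast_add, hsv, Int.cast_one, ← val_eq_one h]
      ring

lemma cycleGraph_dist (hn : 2 ≤ n) (u v : Fin n) :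
    (cycleGraph n).dist u v = min (v - u).val (u - v).val := by
  have : NeZero n := ⟨by omega⟩
  refine le_antisymm (le_min (cycleGraph_dist_le_val_sub hn u v) ?_) ?_
  · rw [dist_comm]
    exact cycleGraph_dist_le_val_sub hn v u
  · obtain ⟨m, rfl⟩ : ∃ m, n = m + 1 := ⟨n - 1, by omega⟩
    obtain ⟨w, hw⟩ := cycleGraph_connected.exists_walk_length_eq_dist u v
    obtain ⟨s, hs, hsv⟩ := w.exists_intCast_eq_sub
    exact hw ▸ (Fin.min_val_sub_le_natAbs hsv).trans hs

lemma cycleGraph_dist_of_le (hn : 2 ≤ n) {u v : Fin n} (huv : u ≤ v) :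
    (cycleGraph n).dist u v = min (v.val - u.val) (n - (v.val - u.val)) := by
  rw [cycleGraph_dist hn, Fin.coe_sub_iff_le.mpr huv]
  rcases huv.lt_or_eq with h | rfl
  · rw [Fin.coe_sub_iff_lt.mpr h]
    omega
  · simp

end cycleGraph

end SimpleGraph

open SimpleGraph

section IsGPSet

variable {V W : Type*} {G : SimpleGraph V} {G' : SimpleGraph W}

lemma IsGPSet.mono {S T : Set V} (hT : IsGPSet G T) (hST : S ⊆ T) : IsGPSet G S :=
  fun x hx y hy z hz => hT x (hST hx) y (hST hy) z (hST hz)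

lemma IsGPSet.image {f : V → W} (hf : Function.Injective f)
    (hdist : ∀ x y, G'.dist (f x) (f y) = G.dist x y) {S : Set V} (hS : IsGPSet G S) :
    IsGPSet G' (f '' S) := by
  rintro _ ⟨x, hx, rfl⟩ _ ⟨y, hy, rfl⟩ _ ⟨z, hz, rfl⟩ hxy hyz hxz
  simpa only [hdist] using
    hS x hx y hy z hz (hf.ne_iff.mp hxy) (hf.ne_iff.mp hyz) (hf.ne_iff.mp hxz)

lemma IsGPSet.preimage {f : V → W} (hf : Function.Injective f)
    (hdist : ∀ x y, G'.dist (f x) (f y) = G.dist x y) {T : Set W} (hT : IsGPSet G' T) :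
    IsGPSet G (f ⁻¹' T) := fun x hx y hy z hz hxy hyz hxz => by
  simpa only [hdist] using hT (f x) hx (f y) hy (f z) hz (hf.ne hxy) (hf.ne hyz) (hf.ne hxz)

lemma not_isGPSet_cycleGraph_of_lt {n : ℕ} {a b c d : Fin n} (hab : a < b) (hbc : b < c)
    (hcd : c < d) : ¬ IsGPSet (cycleGraph n) {a, b, c, d} := by
  intro h
  have hn : 2 ≤ n := by omega
  rcases le_or_gt (2 * (c.val - a.val)) n with hac | hac
  · refine h a (by simp) b (by simp) c (by simp) (by omega) (by omega) (by omega) ?_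
    rw [cycleGraph_dist_of_le hn hab.le, cycleGraph_dist_of_le hn hbc.le,
      cycleGraph_dist_of_le hn (hab.trans hbc).le]
    omega
  · refine h c (by simp) d (by simp) a (by simp) (by omega) (by omega) (by omega) ?_
    rw [dist_comm, cycleGraph_dist_of_le hn (hab.trans hbc).le, cycleGraph_dist_of_le hn hcd.le,
      dist_comm, cycleGraph_dist_of_le hn (hab.trans (hbc.trans hcd)).le]
    omega

lemma IsGPSet.ncard_le_three_of_cycleGraph {n : ℕ} {S : Set (Fin n)}
    (hS : IsGPSet (cycleGraph n) S) : S.ncard ≤ 3 := by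
  classical
  by_contra! h
  obtain ⟨T, hTS, hT⟩ := Finset.exists_subset_card_eq (s := S.toFinset) (n := 4)
    (by rw [← Set.ncard_eq_toFinset_card']; omega)
  set e := T.orderEmbOfFin hT
  have he : {e 0, e 1, e 2, e 3} ⊆ S := by
    simp only [Set.insert_subset_iff, Set.singleton_subset_iff]
    refine ⟨?_, ?_, ?_, ?_⟩ <;> exact Set.mem_toFinset.mp (hTS (T.orderEmbOfFin_mem hT _))
  exact not_isGPSet_cycleGraph_of_lt (e.strictMono (by decide)) (e.strictMono (by decide))
    (e.strictMono (by decide)) (hS.mono he)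

lemma IsGPSet.ncard_inter_verts_le_three {S : Set V} (hS : IsGPSet G S) {H : G.Subgraph}
    (hH : IsIsometricCycle H) :
    (S ∩ H.verts).ncard ≤ 3 := by
  obtain ⟨⟨n, -, ⟨f⟩⟩, hiso⟩ := hH
  have hP : IsGPSet H.coe ((↑) ⁻¹' S) :=
    hS.preimage Subtype.val_injective fun x y => (hiso x y).symm
  calc (S ∩ H.verts).ncard = ((↑) ⁻¹' S : Set H.verts).ncard := by
        rw [← Set.ncard_image_of_injective _ Subtype.val_injective, Subtype.image_preimage_coe,
          Set.inter_comm]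
    _ = (f '' ((↑) ⁻¹' S)).ncard := (Set.ncard_image_of_injective _ f.injective).symm
    _ ≤ 3 := (hP.image f.injective f.dist_eq).ncard_le_three_of_cycleGraph

end IsGPSet

theorem gp_le_three_ic_general {V : Type*} (G : SimpleGraph V)
    (hcov : ∃ n, HasIsometricCycleCover G n) :
    gpNumber G ≤ 3 * icNumber G := by
  obtain ⟨H, hcyc, hcover⟩ : HasIsometricCycleCover G (icNumber G) := Nat.sInf_mem hcov
  refine csSup_le' ?_
  rintro _ ⟨S, hS, -, rfl⟩
  calc S.ncard = (⋃ i, S ∩ (H i).verts).ncard := by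
        rw [← Set.inter_iUnion, hcover, Set.inter_univ]
    _ ≤ ∑ i, (S ∩ (H i).verts).ncard := Set.ncard_iUnion_le_of_fintype _
    _ ≤ ∑ _i : Fin (icNumber G), 3 :=
        Finset.sum_le_sum fun i _ => hS.ncard_inter_verts_le_three (hcyc i)
    _ = 3 * icNumber G := by simp [mul_comm]

theorem gp_le_three_ic {V : Type*} (G : SimpleGraph V) (hG : G.Connected)
    (hcov : ∃ n, HasIsometricCycleCover G n) :
    gpNumber G ≤ 3 * icNumber G :=
  gp_le_three_ic_general G hcov
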